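/- Let x be a complex number (or a real number with x not a negative integer) and n a nonnegative integer. Then ∑_{k=0}^{n} (-1)^k C(n,k) · [C(2x+n+k, k) / C(x+k, k)] · H_k equals H_m(x) + 2H_{2m} - H_m if n = 2m, and equals H_m - 2H_{2m+1} - H_m(x) if n = 2m+1, where H_j(x) = ∑_{i=1}^j 1/(x+i) and C(x+r, s) denotes the generalized binomial coefficient (x+r)(x+r-1)⋯(x+r-s+1)/s!. -/

import Mathlib

/-!
Write `y = x + 1`, `(a)_k` for the rising factorial and `u_k = (2y+n-1)_k / (y)_k`; the ratio of
generalized binomial coefficients in the sum is `u_k`, so the sum is the binomial transform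
`∑ (-1)^k C(n,k) u_k H_k`. Expanding `H_k = ∑_j (-1)^(j-1) C(k,j) / j` and exchanging the sums,
the inner sums `∑_k (-1)^k C(n,k) C(k,j) u_k` collapse to `(-1)^n C(n,j) u_j` by Chu–Vandermonde:
the parameter `2y+n-1` keeps its shape under the shift `k ↦ j + k`. A second use of
Chu–Vandermonde turns what is left into `H_n + Z_n`, where
`Z_n = ∑_{j ≤ n} (-1)^(j-1)/j · (y+n-j)_j / (y)_j`. Finally `Z_{n+1} - Z_n = (-1)^n/(n+1) + E_n`,
where `E_n` vanishes for even `n` by a reflection symmetry of its terms and equals `1/(y+m)` for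
`n = 2m+1` by telescoping; these last terms add up to `H_m(x)`.
-/

open Finset

noncomputable def H (n : ℕ) : ℝ := ∑ i ∈ Finset.range n, (1:ℝ)/(i+1)
noncomputable def Hx (x : ℝ) (n : ℕ) : ℝ := ∑ i ∈ Finset.range n, 1/(x+(i:ℝ)+1)
noncomputable def gch (y : ℝ) (s : ℕ) : ℝ := (∏ i ∈ Finset.range s, (y - (i:ℝ))) / (Nat.factorial s)

open Polynomial

section Pochhammer

variable {K : Type*} [Field K]

theorem ascPochhammer_eval_succ_left (a : K) (n : ℕ) :
    (ascPochhammer K (n + 1)).eval a = a * (ascPochhammer K n).eval (a + 1) := by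
  simp [ascPochhammer_succ_left, eval_comp]

theorem ascPochhammer_eval_add (a : K) (n m : ℕ) :
    (ascPochhammer K (n + m)).eval a =
      (ascPochhammer K n).eval a * (ascPochhammer K m).eval (a + n) := by
  simp [← ascPochhammer_mul, eval_comp]

theorem ascPochhammer_eval_neg (a : K) (n : ℕ) :
    (ascPochhammer K n).eval (-a) = (-1) ^ n * (ascPochhammer K n).eval (a - n + 1) := by
  rw [ascPochhammer_eval_neg_eq_descPochhammer, descPochhammer_eval_eq_ascPochhammer]

theorem ascPochhammer_eval_ne_zero {a : K} (ha : ∀ i : ℕ, a + i ≠ 0) (n : ℕ) :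
    (ascPochhammer K n).eval a ≠ 0 := by
  rw [Ne, ascPochhammer_eval_eq_zero_iff]
  rintro ⟨k, -, hk⟩
  exact ha k (by rw [hk, add_neg_cancel])

theorem ascPochhammer_eval_add_one_sub (a : K) (n : ℕ) :
    (ascPochhammer K (n + 1)).eval (a + 1) - (ascPochhammer K (n + 1)).eval a =
      (n + 1) * (ascPochhammer K n).eval (a + 1) := by
  rw [ascPochhammer_succ_eval, ascPochhammer_eval_succ_left]
  ring

end Pochhammer

section BinomialTransform

variable {K : Type*} [Field K]

def binomialTransform (f : ℕ → K) (n : ℕ) : K :=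
  ∑ k ∈ range (n + 1), (-1) ^ k * n.choose k * f k

theorem binomialTransform_const_mul (c : K) (f : ℕ → K) (n : ℕ) :
    binomialTransform (fun k => c * f k) n = c * binomialTransform f n := by
  rw [binomialTransform, binomialTransform, mul_sum]
  exact sum_congr rfl fun k _ => by ring

theorem binomialTransform_eq_sub (f : ℕ → K) (n : ℕ) :
    binomialTransform f n = f 0 - ∑ k ∈ range n, (-1) ^ k * n.choose (k + 1) * f (k + 1) := by
  rw [binomialTransform, sum_range_succ', sub_eq_neg_add, ← sum_neg_distrib]
  simp [pow_succ]

theorem binomialTransform_succ (f : ℕ → K) (n : ℕ) :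
    binomialTransform f (n + 1) = binomialTransform (fun k => f k - f (k + 1)) n := by
  have hf := binomialTransform_eq_sub f n
  rw [binomialTransform, sum_range_succ] at hf
  rw [binomialTransform_eq_sub, binomialTransform]
  simp only [Nat.choose_succ_succ', Nat.cast_add, mul_add, add_mul, mul_sub, sum_add_distrib,
    sum_sub_distrib, sum_range_succ _ n, Nat.choose_succ_self, Nat.cast_zero, mul_zero, zero_mul,
    add_zero] at hf ⊢
  linear_combination -hf

theorem chu_vandermonde (c : K) {y : K} (hy : ∀ i : ℕ, y + i ≠ 0) (n : ℕ) :
    binomialTransform (fun k => (ascPochhammer K k).eval c / (ascPochhammer K k).eval y) n =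
      (ascPochhammer K n).eval (y - c) / (ascPochhammer K n).eval y := by
  induction n generalizing y with
  | zero => simp [binomialTransform]
  | succ n ih =>
    have hy₀ : y ≠ 0 := by simpa using hy 0
    have hy₁ : ∀ i : ℕ, y + 1 + i ≠ 0 := fun i => by
      convert hy (i + 1) using 1; push_cast; ring
    have hdiff : (fun k => (ascPochhammer K k).eval c / (ascPochhammer K k).eval y -
          (ascPochhammer K (k + 1)).eval c / (ascPochhammer K (k + 1)).eval y) =
        fun k => (y - c) / y *
          ((ascPochhammer K k).eval c / (ascPochhammer K k).eval (y + 1)) := by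
      funext k
      have hshift :
          y * (ascPochhammer K k).eval (y + 1) = (ascPochhammer K k).eval y * (y + k) := by
        rw [← ascPochhammer_eval_succ_left, ascPochhammer_succ_eval]
      have := ascPochhammer_eval_ne_zero hy k
      have := ascPochhammer_eval_ne_zero hy₁ k
      have := hy k
      rw [ascPochhammer_succ_eval, ascPochhammer_succ_eval]
      field_simp
      linear_combination (ascPochhammer K k).eval c * (y - c) * hshift
    rw [binomialTransform_succ, hdiff, binomialTransform_const_mul, ih hy₁,
      ascPochhammer_eval_succ_left, ascPochhammer_eval_succ_left, sub_add_eq_add_sub]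
    have := ascPochhammer_eval_ne_zero hy₁ n
    field_simp

theorem binomialTransform_ascPochhammer_two_mul_add {y : K} (hy : ∀ i : ℕ, y + i ≠ 0)
    (p : ℕ) :
    binomialTransform
        (fun k => (ascPochhammer K k).eval (2 * y + p - 1) / (ascPochhammer K k).eval y) p =
      (-1) ^ p := by
  rw [chu_vandermonde _ hy, show y - (2 * y + p - 1) = -(y + p - 1) by ring,
    ascPochhammer_eval_neg, show y + p - 1 - p + 1 = y by ring, mul_div_assoc,
    div_self (ascPochhammer_eval_ne_zero hy p), mul_one]

theorem binomialTransform_choose_mul {y : K} (hy : ∀ i : ℕ, y + i ≠ 0) {j n : ℕ}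
    (hj : j ≤ n) :
    binomialTransform (fun k => k.choose j *
        ((ascPochhammer K k).eval (2 * y + n - 1) / (ascPochhammer K k).eval y)) n =
      (-1) ^ n * n.choose j *
        ((ascPochhammer K j).eval (2 * y + n - 1) / (ascPochhammer K j).eval y) := by
  obtain ⟨p, rfl⟩ := Nat.exists_eq_add_of_le hj
  set c : K := 2 * y + ((j + p : ℕ) : K) - 1
  have hyj : ∀ i : ℕ, y + j + i ≠ 0 := fun i => by
    convert hy (j + i) using 1; push_cast; ring
  have hc : c + j = 2 * (y + j) + p - 1 := by push_cast [c]; ring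
  rw [binomialTransform, show j + p + 1 = j + (p + 1) by ring, sum_range_add,
    sum_eq_zero fun k hk => by simp [Nat.choose_eq_zero_of_lt (mem_range.1 hk)], zero_add]
  have hterm : ∀ l ∈ range (p + 1),
      (-1) ^ (j + l) * ((j + p).choose (j + l) : K) * ((j + l).choose j *
        ((ascPochhammer K (j + l)).eval c / (ascPochhammer K (j + l)).eval y)) =
      (-1) ^ j * (j + p).choose j * ((ascPochhammer K j).eval c / (ascPochhammer K j).eval y) *
        ((-1) ^ l * p.choose l *
          ((ascPochhammer K l).eval (2 * (y + j) + p - 1) / (ascPochhammer K l).eval (y + j))) := by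
    intro l _
    have hchoose : ((j + p).choose (j + l) : K) * (j + l).choose j =
        (j + p).choose j * p.choose l := by
      have h := Nat.choose_mul (n := j + p) (Nat.le_add_right j l)
      rw [Nat.add_sub_cancel_left, Nat.add_sub_cancel_left] at h
      exact_mod_cast congrArg (Nat.cast (R := K)) h
    have := ascPochhammer_eval_ne_zero hy j
    have := ascPochhammer_eval_ne_zero hyj l
    rw [ascPochhammer_eval_add c, ascPochhammer_eval_add y, hc, pow_add]
    field_simp
    linear_combination (ascPochhammer K j).eval c *
      (ascPochhammer K l).eval (2 * (y + j) + p - 1) * hchoose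
  rw [sum_congr rfl hterm, ← mul_sum, ← binomialTransform,
    binomialTransform_ascPochhammer_two_mul_add hyj, pow_add]
  ring

theorem sum_choose_succ_mul_div_eq_sum_binomialTransform [CharZero K] (f : ℕ → K)
    (n : ℕ) :
    ∑ j ∈ range n, (-1) ^ j * n.choose (j + 1) * f (j + 1) / (j + 1) =
      ∑ ν ∈ range n, (f 0 - binomialTransform f (ν + 1)) / (ν + 1) := by
  induction n with
  | zero => simp
  | succ n ih =>
    have hpascal :
        ∑ j ∈ range (n + 1), (-1) ^ j * (n + 1).choose (j + 1) * f (j + 1) / (j + 1) =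
        ∑ j ∈ range (n + 1), (-1) ^ j * (n + 1).choose (j + 1) * f (j + 1) / (n + 1) +
          ∑ j ∈ range (n + 1), (-1) ^ j * n.choose (j + 1) * f (j + 1) / (j + 1) := by
      rw [← sum_add_distrib]
      refine sum_congr rfl fun j _ => ?_
      have h := congrArg (Nat.cast (R := K)) (Nat.add_one_mul_choose_eq n j)
      push_cast at h
      nth_rewrite 1 [Nat.choose_succ_succ']
      push_cast
      field_simp
      linear_combination f (j + 1) * h
    have hlast : ∑ j ∈ range (n + 1), (-1) ^ j * n.choose (j + 1) * f (j + 1) / (j + 1) =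
        ∑ j ∈ range n, (-1) ^ j * n.choose (j + 1) * f (j + 1) / (j + 1) := by
      simp [sum_range_succ _ n]
    rw [hpascal, hlast, ih,
      sum_range_succ (fun ν => (f 0 - binomialTransform f (ν + 1)) / (ν + 1)),
      binomialTransform_eq_sub f (n + 1), ← sum_div]
    ring

end BinomialTransform

section AltHarmonic

variable {K : Type*} [Field K]

-- A deformation of the alternating harmonic number `∑_{j ≤ n} (-1)^(j-1)/j`, recovered as
-- `y → ∞`.
noncomputable def altHarmonic (y : K) (n : ℕ) : K :=
  ∑ ν ∈ range n, (-1) ^ ν * (ascPochhammer K (ν + 1)).eval (y + n - 1 - ν) /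
    (ascPochhammer K (ν + 1)).eval y / (ν + 1)

noncomputable def altHarmonicDefect (y : K) (n : ℕ) : K :=
  ∑ ν ∈ range n,
    (-1) ^ ν * (ascPochhammer K ν).eval (y + n - ν) / (ascPochhammer K (ν + 1)).eval y

variable {y : K} (hy : ∀ i : ℕ, y + i ≠ 0)
include hy

theorem two_mul_add_sub_one_mul_altHarmonicDefect (n : ℕ) :
    (2 * y + n - 1) * altHarmonicDefect y n = 1 - (-1) ^ n := by
  set f : ℕ → K := fun ν => (-1) ^ ν * (ascPochhammer K ν).eval (y + n - ν) /
    (ascPochhammer K ν).eval y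
  have hterm : ∀ ν ∈ range n, (2 * y + n - 1) *
      ((-1) ^ ν * (ascPochhammer K ν).eval (y + n - ν) / (ascPochhammer K (ν + 1)).eval y) =
        f ν - f (ν + 1) := by
    intro ν _
    have h := ascPochhammer_eval_succ_left (y + n - (ν + 1)) ν
    rw [show y + n - (ν + 1) + 1 = y + n - ν by ring] at h
    have := ascPochhammer_eval_ne_zero hy ν
    have := hy ν
    simp only [f, Nat.cast_add_one, h, ascPochhammer_succ_eval, pow_succ]
    field_simp
    ring
  rw [altHarmonicDefect, mul_sum, sum_congr rfl hterm, sum_range_sub']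
  simp [f, mul_div_assoc, div_self (ascPochhammer_eval_ne_zero hy n)]

variable [CharZero K]

theorem altHarmonic_succ (n : ℕ) :
    altHarmonic y (n + 1) = altHarmonic y n + (-1) ^ n / (n + 1) + altHarmonicDefect y n := by
  have hlast : y + ((n + 1 : ℕ) : K) - 1 - n = y := by push_cast; ring
  have hterm : ∀ ν ∈ range n,
      (-1) ^ ν * (ascPochhammer K (ν + 1)).eval (y + ((n + 1 : ℕ) : K) - 1 - ν) /
        (ascPochhammer K (ν + 1)).eval y / (ν + 1) =
      (-1) ^ ν * (ascPochhammer K (ν + 1)).eval (y + n - 1 - ν) /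
          (ascPochhammer K (ν + 1)).eval y / (ν + 1) +
        (-1) ^ ν * (ascPochhammer K ν).eval (y + n - ν) / (ascPochhammer K (ν + 1)).eval y := by
    intro ν _
    have h := ascPochhammer_eval_add_one_sub (y + n - 1 - ν) ν
    rw [show y + n - 1 - ν + 1 = y + n - ν by ring] at h
    rw [show y + ((n + 1 : ℕ) : K) - 1 - ν = y + n - ν by push_cast; ring]
    have := ascPochhammer_eval_ne_zero hy (ν + 1)
    have : (ν : K) + 1 ≠ 0 := Nat.cast_add_one_ne_zero ν
    field_simp
    linear_combination h
  rw [altHarmonic, sum_range_succ, hlast, sum_congr rfl hterm, sum_add_distrib, ← altHarmonic,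
    ← altHarmonicDefect, mul_div_assoc, div_self (ascPochhammer_eval_ne_zero hy (n + 1))]
  ring

-- Not a consequence of the telescoping identity above, whose factor `2y+n-1` may vanish.
theorem altHarmonicDefect_eq_zero_of_even {n : ℕ} (hn : Even n) :
    altHarmonicDefect y n = 0 := by
  set g : ℕ → K := fun ν => (-1) ^ ν * (ascPochhammer K ν).eval (y + n - ν) /
    (ascPochhammer K (ν + 1)).eval y
  have hsymm : ∀ ν < n, g ν = (-1) ^ ν * ((ascPochhammer K n).eval y /
      ((ascPochhammer K (ν + 1)).eval y * (ascPochhammer K (n - ν)).eval y)) := by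
    intro ν hν
    have h := ascPochhammer_eval_add y (n - ν) ν
    rw [Nat.sub_add_cancel hν.le, Nat.cast_sub hν.le, ← add_sub_assoc] at h
    have := ascPochhammer_eval_ne_zero hy (n - ν)
    have := ascPochhammer_eval_ne_zero hy (ν + 1)
    simp only [g, h]
    field_simp
  have hreflect : ∀ ν ∈ range n, g (n - 1 - ν) = -g ν := by
    intro ν hν
    have hν := mem_range.1 hν
    have hpow : (-1 : K) ^ (n - 1 - ν) * (-1) ^ (ν + 1) = 1 := by
      rw [← pow_add, show n - 1 - ν + (ν + 1) = n by omega, hn.neg_one_pow]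
    have hsq : (-1 : K) ^ ν * (-1) ^ ν = 1 := by
      rw [← pow_add]
      exact Even.neg_one_pow ⟨ν, rfl⟩
    rw [hsymm _ (by omega), hsymm ν hν, show n - 1 - ν + 1 = n - ν by omega,
      show n - (n - 1 - ν) = ν + 1 by omega, mul_comm ((ascPochhammer K (n - ν)).eval y)]
    linear_combination ((ascPochhammer K n).eval y /
      ((ascPochhammer K (ν + 1)).eval y * (ascPochhammer K (n - ν)).eval y)) *
        (-(-1) ^ (n - 1 - ν) * hsq - (-1) ^ ν * hpow)
  have h := sum_range_reflect g n
  rw [sum_congr rfl hreflect, sum_neg_distrib] at h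
  have h2 : (2 : K) * altHarmonicDefect y n = 0 := by
    rw [altHarmonicDefect]
    linear_combination -h
  exact (mul_eq_zero.1 h2).resolve_left two_ne_zero

theorem altHarmonicDefect_two_mul_add_one (m : ℕ) :
    altHarmonicDefect y (2 * m + 1) = 1 / (y + m) := by
  have h := two_mul_add_sub_one_mul_altHarmonicDefect hy (2 * m + 1)
  rw [(odd_two_mul_add_one m).neg_one_pow] at h
  have := hy m
  field_simp
  push_cast at h
  linear_combination h / 2

end AltHarmonic

section Harmonic

theorem H_succ (n : ℕ) : H (n + 1) = H n + 1 / (n + 1) := by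
  simp [H, sum_range_succ]

theorem Hx_succ (x : ℝ) (n : ℕ) : Hx x (n + 1) = Hx x n + 1 / (x + n + 1) := by
  simp [Hx, sum_range_succ]

theorem H_eq_sum_choose {k n : ℕ} (hk : k ≤ n) :
    H k = ∑ j ∈ range n, (-1 : ℝ) ^ j * k.choose (j + 1) / (j + 1) := by
  have h := sum_choose_succ_mul_div_eq_sum_binomialTransform (fun _ => (1 : ℝ)) k
  have hconst : ∀ ν, binomialTransform (fun _ => (1 : ℝ)) (ν + 1) = 0 := fun ν => by
    rw [binomialTransform_succ]
    simp [binomialTransform]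
  simp only [hconst, mul_one, sub_zero] at h
  rw [H, ← h]
  refine sum_subset (range_subset_range.2 hk) fun j _ hj => ?_
  simp [Nat.choose_eq_zero_of_lt (by simpa using hj : k < j + 1)]

theorem binomialTransform_ascPochhammer_mul_H {y : ℝ} (hy : ∀ i : ℕ, y + i ≠ 0) (n : ℕ) :
    binomialTransform (fun k => (ascPochhammer ℝ k).eval (2 * y + n - 1) /
        (ascPochhammer ℝ k).eval y * H k) n = (-1) ^ n * (H n + altHarmonic y n) := by
  set u : ℕ → ℝ := fun k =>
    (ascPochhammer ℝ k).eval (2 * y + n - 1) / (ascPochhammer ℝ k).eval y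
  calc binomialTransform (fun k => u k * H k) n
      = ∑ j ∈ range n, (-1) ^ j / (j + 1) *
          binomialTransform (fun k => k.choose (j + 1) * u k) n := by
        simp only [binomialTransform, mul_sum]
        rw [sum_comm]
        refine sum_congr rfl fun k hk => ?_
        rw [H_eq_sum_choose (Nat.lt_succ_iff.1 (mem_range.1 hk)), mul_sum, mul_sum]
        exact sum_congr rfl fun j _ => by ring
    _ = (-1) ^ n * ∑ j ∈ range n, (-1) ^ j * n.choose (j + 1) * u (j + 1) / (j + 1) := by
        rw [mul_sum]
        refine sum_congr rfl fun j hj => ?_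
        rw [binomialTransform_choose_mul hy (mem_range.1 hj)]
        ring
    _ = (-1) ^ n * ∑ ν ∈ range n,
          (1 - (ascPochhammer ℝ (ν + 1)).eval (y - (2 * y + n - 1)) /
            (ascPochhammer ℝ (ν + 1)).eval y) / (ν + 1) := by
        rw [sum_choose_succ_mul_div_eq_sum_binomialTransform]
        simp [u, chu_vandermonde _ hy]
    _ = (-1) ^ n * (H n + altHarmonic y n) := by
        rw [H, altHarmonic, ← sum_add_distrib]
        congr 1
        refine sum_congr rfl fun ν _ => ?_
        rw [show y - (2 * y + n - 1) = -(y + n - 1) by ring, ascPochhammer_eval_neg,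
          show y + n - 1 - ((ν + 1 : ℕ) : ℝ) + 1 = y + n - 1 - ν by push_cast; ring, pow_succ]
        ring

theorem altHarmonic_two_mul_add_one {x : ℝ} (hx : ∀ i : ℕ, x + 1 + i ≠ 0) (m : ℕ) :
    altHarmonic (x + 1) (2 * m + 1) = altHarmonic (x + 1) (2 * m) + 1 / (2 * m + 1) := by
  rw [altHarmonic_succ hx, altHarmonicDefect_eq_zero_of_even hx (even_two_mul m),
    (even_two_mul m).neg_one_pow]
  push_cast
  ring

theorem altHarmonic_two_mul {x : ℝ} (hx : ∀ i : ℕ, x + 1 + i ≠ 0) (m : ℕ) :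
    altHarmonic (x + 1) (2 * m) = Hx x m + H (2 * m) - H m := by
  induction m with
  | zero => simp [altHarmonic, Hx, H]
  | succ m ih =>
    rw [show 2 * (m + 1) = 2 * m + 1 + 1 by ring, altHarmonic_succ hx,
      altHarmonic_two_mul_add_one hx, altHarmonicDefect_two_mul_add_one hx,
      (odd_two_mul_add_one m).neg_one_pow, ih, H_succ, H_succ, H_succ, Hx_succ]
    push_cast
    field_simp
    ring

theorem gch_add_self (b : ℝ) (k : ℕ) :
    gch (b + k) k = (ascPochhammer ℝ k).eval (b + 1) / k.factorial := by
  rw [gch, ← descPochhammer_eval_eq_prod_range, descPochhammer_eval_eq_ascPochhammer,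
    add_sub_cancel_right]

theorem sum_gch_div_gch_mul_H {x : ℝ} (hx : ∀ i : ℕ, x + 1 + i ≠ 0) (n : ℕ) :
    ∑ k ∈ range (n + 1),
        (-1 : ℝ) ^ k * n.choose k * (gch (2 * x + n + k) k / gch (x + k) k) * H k =
      (-1) ^ n * (H n + altHarmonic (x + 1) n) := by
  rw [← binomialTransform_ascPochhammer_mul_H hx, binomialTransform]
  refine sum_congr rfl fun k _ => ?_
  rw [gch_add_self, gch_add_self, div_div_div_cancel_right₀ (by positivity),
    show 2 * x + n + 1 = 2 * (x + 1) + n - 1 by ring]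
  ring

end Harmonic

theorem stmt9 (x : ℝ) (hx : ∀ i : ℕ, 1 ≤ i → x + (i:ℝ) ≠ 0) (m : ℕ) :
    (∑ k ∈ Finset.range (2*m+1), (-1:ℝ)^k * ((2*m).choose k : ℝ) *
        (gch (2*x+2*(m:ℝ)+(k:ℝ)) k / gch (x+(k:ℝ)) k) * H k
      = Hx x m + 2 * H (2*m) - H m) ∧
    (∑ k ∈ Finset.range (2*m+2), (-1:ℝ)^k * ((2*m+1).choose k : ℝ) *
        (gch (2*x+2*(m:ℝ)+1+(k:ℝ)) k / gch (x+(k:ℝ)) k) * H k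
      = H m - 2 * H (2*m+1) - Hx x m) := by
  have hy : ∀ i : ℕ, x + 1 + i ≠ 0 := fun i => by
    convert hx (i + 1) (by omega) using 1
    push_cast
    ring
  have heven := sum_gch_div_gch_mul_H hy (2 * m)
  have hodd := sum_gch_div_gch_mul_H hy (2 * m + 1)
  rw [(even_two_mul m).neg_one_pow, altHarmonic_two_mul hy] at heven
  rw [(odd_two_mul_add_one m).neg_one_pow, altHarmonic_two_mul_add_one hy,
    altHarmonic_two_mul hy, H_succ] at hodd
  push_cast [← add_assoc] at heven hodd
  constructor
  · rw [heven]
    ring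
  · rw [hodd, H_succ]
    push_cast
    ring
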